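/- The heat evolution of the Choi–Lam polynomial f_CL(x,y,z) = 1 − 4xyz + x²y² + x²z² + y²z² satisfies 𝔭_CL(x,y,z,t) = f_CL(x,y,z) + 12t² + 4t(x²+y²+z²) for all t ∈ ℝ, and at t = 1/9 it is a sum of squares: 𝔭_CL(x,y,z,1/9) = 31/27 + (xy − (2/3)z)² + (xz − (2/3)y)² + (yz − (2/3)x)². -/
import Mathlib


/-- The Choi–Lam polynomial `f_CL(x,y,z) = 1 − 4xyz + x²y² + x²z² + y²z²`. -/
noncomputable def fCL (x y z : ℝ) : ℝ :=
  1 - 4 * x * y * z + x ^ 2 * y ^ 2 + x ^ 2 * z ^ 2 + y ^ 2 * z ^ 2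

/-- The heat evolution of the Choi–Lam polynomial:
`𝔭_CL(x,y,z,t) = f_CL(x,y,z) + 12t² + 4t(x² + y² + z²)`. -/
noncomputable def pCL (x y z t : ℝ) : ℝ :=
  fCL x y z + 12 * t ^ 2 + 4 * t * (x ^ 2 + y ^ 2 + z ^ 2)

lemma deriv_quad (a b c t : ℝ) :
    deriv (fun s : ℝ => a * s ^ 2 + b * s + c) t = 2 * a * t + b := by
  have h : HasDerivAt (fun s : ℝ => a * s ^ 2 + b * s + c) (a * (2 * t) + b) t := by
    have h1 : HasDerivAt (fun s : ℝ => s ^ 2) (2 * t) t := by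
      simpa using hasDerivAt_pow 2 t
    exact (((h1.const_mul a).add ((hasDerivAt_id t).const_mul b)).add_const c).congr_deriv
      (by ring)
  rw [h.deriv]; ring

lemma iteratedDeriv_two_quad (a b c : ℝ) (x : ℝ) :
    iteratedDeriv 2 (fun u : ℝ => a * u ^ 2 + b * u + c) x = 2 * a := by
  rw [show (2 : ℕ) = 1 + 1 from rfl, iteratedDeriv_succ, iteratedDeriv_one]
  have : deriv (fun u : ℝ => a * u ^ 2 + b * u + c) = fun u => 2 * a * u + b := by
    funext u; exact deriv_quad a b c u
  rw [this]
  have := deriv_quad 0 (2 * a) b x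
  simpa using this

/-- `𝔭_CL(x,y,z,t) = f_CL(x,y,z) + 12t² + 4t(x²+y²+z²)` solves the heat equation with
initial value the Choi–Lam polynomial, and at `t = 1/9` it is a sum of squares:
`𝔭_CL(x,y,z,1/9) = 31/27 + (xy − (2/3)z)² + (xz − (2/3)y)² + (yz − (2/3)x)²`. -/
theorem pCL_heat_evolution_and_sos :
    (∀ x y z t : ℝ,
      deriv (fun s => pCL x y z s) t
        = iteratedDeriv 2 (fun u => pCL u y z t) x
          + iteratedDeriv 2 (fun v => pCL x v z t) y
          + iteratedDeriv 2 (fun w => pCL x y w t) z) ∧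
    (∀ x y z : ℝ, pCL x y z 0 = fCL x y z) ∧
    (∀ x y z : ℝ,
      pCL x y z (1 / 9)
        = 31 / 27 + (x * y - (2 / 3) * z) ^ 2 + (x * z - (2 / 3) * y) ^ 2
          + (y * z - (2 / 3) * x) ^ 2) := by
  refine ⟨fun x y z t => ?_, fun x y z => by simp [pCL, fCL], fun x y z => by simp only [pCL, fCL]; ring⟩
  have e1 : (fun s => pCL x y z s)
      = fun s : ℝ => 12 * s ^ 2 + (4 * (x ^ 2 + y ^ 2 + z ^ 2)) * s + fCL x y z := by
    funext s; simp only [pCL]; ring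
  have e2 : (fun u => pCL u y z t)
      = fun u : ℝ => (y ^ 2 + z ^ 2 + 4 * t) * u ^ 2 + (-(4 * y * z)) * u
          + (1 + y ^ 2 * z ^ 2 + 12 * t ^ 2 + 4 * t * (y ^ 2 + z ^ 2)) := by
    funext u; simp only [pCL, fCL]; ring
  have e3 : (fun v => pCL x v z t)
      = fun v : ℝ => (x ^ 2 + z ^ 2 + 4 * t) * v ^ 2 + (-(4 * x * z)) * v
          + (1 + x ^ 2 * z ^ 2 + 12 * t ^ 2 + 4 * t * (x ^ 2 + z ^ 2)) := by
    funext v; simp only [pCL, fCL]; ring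
  have e4 : (fun w => pCL x y w t)
      = fun w : ℝ => (x ^ 2 + y ^ 2 + 4 * t) * w ^ 2 + (-(4 * x * y)) * w
          + (1 + x ^ 2 * y ^ 2 + 12 * t ^ 2 + 4 * t * (x ^ 2 + y ^ 2)) := by
    funext w; simp only [pCL, fCL]; ring
  rw [e1, e2, e3, e4, deriv_quad, iteratedDeriv_two_quad, iteratedDeriv_two_quad,
    iteratedDeriv_two_quad]
  ring
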